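/- For every basis element a_{j,i}s^α of A and every ℓ ∈ ℕ one has (a_{j,i}s^α)·s_i^ℓ = a_{j,i}s^{α+ℓ} = s_j^ℓ·(a_{j,i}s^α); consequently, for every ℓ ∈ ℕ the element z_ℓ := Σ_{i=0}^n s_i^ℓ of A is central: z_ℓ·x = x·z_ℓ for all x ∈ A. (These central elements realize the degree-0 A∞-natural transformations id ⇒ id, η⁰(T_i) = Σ_ℓ ε_ℓ s_i^ℓ, of the paper.) -/

import Mathlib

/-!
The correction `δ(i, j, k)` vanishes as soon as two consecutive indices coincide, so multiplying a
basis element by `s^ℓ` on either side only adds `ℓ` dots. Hence `z_ℓ` acts on every basis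
element, from the left and from the right, by the same shift `a_{j,i}s^α ↦ a_{j,i}s^{α+ℓ}`, and
bilinearity extends this to all of `A`.
-/

/-- The dot-count correction `δ(i,j,k)` in the KLRW/Coulomb-branch algebra. -/
def dlt (i j k : ℤ) : ℕ :=
  if 0 ≤ (i - j) * (j - k) then 0 else min (i - j).natAbs (j - k).natAbs

namespace KLRW

/-- Index of a basis element `a_{j,i}s^α`: `(j, i, α)` (target, source, number of dots). -/
abbrev B (n : ℕ) := Fin (n + 1) × Fin (n + 1) × ℕ

/-- The underlying free `k`-module of the KLRW algebra of the Fukaya category of the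
Coulomb branch `M(•,1)` with `n` punctures: the free module on the symbols `a_{j,i}s^α`. -/
abbrev A (n : ℕ) (k : Type*) [Field k] := B n →₀ k

variable (n : ℕ) (k : Type*) [Field k]

/-- `δ(i,j,l)` evaluated on vertex indices. -/
def dd (i j l : Fin (n + 1)) : ℕ := dlt ((i : ℕ) : ℤ) ((j : ℕ) : ℤ) ((l : ℕ) : ℤ)

/-- The basis element `a_{j,i}s^α`. -/
noncomputable def bas (j i : Fin (n + 1)) (α : ℕ) : A n k := Finsupp.single (j, i, α) 1

/-- Product of two basis elements:
`(a_{k,j'}s^β)·(a_{j,i}s^α) = a_{k,i}s^{β+α+δ(i,j,k)}` if `j' = j`, and `0` otherwise. -/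
noncomputable def mulB (x y : B n) : A n k :=
  if x.2.1 = y.1 then
    Finsupp.single (x.1, y.2.1, x.2.2 + y.2.2 + dd n y.2.1 y.1 x.1) 1
  else 0

/-- The `k`-bilinear multiplication on `A` determined by `mulB` on basis elements. -/
noncomputable def mul (x y : A n k) : A n k :=
  x.sum fun xb c => y.sum fun yb d => (c * d) • mulB n k xb yb

/-- The element `1 = Σ_{i=0}^n e_i` where `e_i = a_{i,i}s^0`. -/
noncomputable def one : A n k := Finset.univ.sum fun i : Fin (n + 1) => bas n k i i 0

end KLRW

theorem dlt_self_left (i k : ℤ) : dlt i i k = 0 := by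
  simp [dlt]

theorem dlt_self_right (i j : ℤ) : dlt i j j = 0 := by
  simp [dlt]

namespace KLRW

variable (n : ℕ) (k : Type*) [Field k]

theorem mul_zero (x : A n k) : mul n k x 0 = 0 := by
  simp [mul]

theorem zero_mul (x : A n k) : mul n k 0 x = 0 := by
  simp [mul]

theorem mul_add (x y z : A n k) : mul n k x (y + z) = mul n k x y + mul n k x z := by
  unfold mul
  rw [← Finsupp.sum_add]
  congr 1; funext xb c
  exact Finsupp.sum_add_index' (fun _ => by simp) (fun _ _ _ => by rw [_root_.mul_add, add_smul])

theorem add_mul (x y z : A n k) : mul n k (x + y) z = mul n k x z + mul n k y z := by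
  unfold mul
  refine Finsupp.sum_add_index' (fun _ => by simp) fun _ _ _ => ?_
  rw [← Finsupp.sum_add]
  congr 1; funext yb d
  rw [_root_.add_mul, add_smul]

theorem sum_mul {ι : Type*} (s : Finset ι) (f : ι → A n k) (y : A n k) :
    mul n k (∑ i ∈ s, f i) y = ∑ i ∈ s, mul n k (f i) y := by
  induction s using Finset.cons_induction with
  | empty => simp [zero_mul]
  | cons a s _ ih => rw [Finset.sum_cons, Finset.sum_cons, add_mul, ih]

theorem mul_sum {ι : Type*} (s : Finset ι) (f : ι → A n k) (y : A n k) :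
    mul n k y (∑ i ∈ s, f i) = ∑ i ∈ s, mul n k y (f i) := by
  induction s using Finset.cons_induction with
  | empty => simp [mul_zero]
  | cons a s _ ih => rw [Finset.sum_cons, Finset.sum_cons, mul_add, ih]

theorem single_mul_single (a b : B n) (c d : k) :
    mul n k (Finsupp.single a c) (Finsupp.single b d) = (c * d) • mulB n k a b := by
  unfold mul
  rw [Finsupp.sum_single_index (by simp), Finsupp.sum_single_index (by simp)]

theorem mulB_dots_left (j i : Fin (n + 1)) (α ℓ : ℕ) :
    mulB n k (j, j, ℓ) (j, i, α) = Finsupp.single (j, i, α + ℓ) 1 := by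
  simp [mulB, dd, dlt_self_right, Nat.add_comm ℓ]

theorem mulB_dots_right (j i : Fin (n + 1)) (α ℓ : ℕ) :
    mulB n k (j, i, α) (i, i, ℓ) = Finsupp.single (j, i, α + ℓ) 1 := by
  simp [mulB, dd, dlt_self_left]

theorem mulB_dots_left_of_ne {m j : Fin (n + 1)} (h : m ≠ j) (i : Fin (n + 1)) (α ℓ : ℕ) :
    mulB n k (m, m, ℓ) (j, i, α) = 0 := by
  simp [mulB, h]

theorem mulB_dots_right_of_ne {i m : Fin (n + 1)} (h : i ≠ m) (j : Fin (n + 1)) (α ℓ : ℕ) :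
    mulB n k (j, i, α) (m, m, ℓ) = 0 := by
  simp [mulB, h]

theorem bas_mul_dots (j i : Fin (n + 1)) (α ℓ : ℕ) :
    mul n k (bas n k j i α) (bas n k i i ℓ) = bas n k j i (α + ℓ) := by
  rw [bas, bas, single_mul_single, mulB_dots_right, one_mul, one_smul, bas]

theorem dots_mul_bas (j i : Fin (n + 1)) (α ℓ : ℕ) :
    mul n k (bas n k j j ℓ) (bas n k j i α) = bas n k j i (α + ℓ) := by
  rw [bas, bas, single_mul_single, mulB_dots_left, one_mul, one_smul, bas]

noncomputable def dotSum (ℓ : ℕ) : A n k := ∑ i, bas n k i i ℓ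

theorem dotSum_mul_single (ℓ : ℕ) (j i : Fin (n + 1)) (α : ℕ) (c : k) :
    mul n k (dotSum n k ℓ) (Finsupp.single (j, i, α) c) = Finsupp.single (j, i, α + ℓ) c := by
  rw [dotSum, sum_mul, Finset.sum_eq_single j (fun m _ hm => ?_) (by simp)]
  · rw [bas, single_mul_single, mulB_dots_left, Finsupp.smul_single, one_mul, smul_eq_mul,
      mul_one]
  · rw [bas, single_mul_single, mulB_dots_left_of_ne n k hm, smul_zero]

theorem single_mul_dotSum (ℓ : ℕ) (j i : Fin (n + 1)) (α : ℕ) (c : k) :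
    mul n k (Finsupp.single (j, i, α) c) (dotSum n k ℓ) = Finsupp.single (j, i, α + ℓ) c := by
  rw [dotSum, mul_sum, Finset.sum_eq_single i (fun m _ hm => ?_) (by simp)]
  · rw [bas, single_mul_single, mulB_dots_right, Finsupp.smul_single, mul_one, smul_eq_mul,
      mul_one]
  · rw [bas, single_mul_single, mulB_dots_right_of_ne n k (Ne.symm hm), smul_zero]

theorem dotSum_mul_comm (ℓ : ℕ) (x : A n k) :
    mul n k (dotSum n k ℓ) x = mul n k x (dotSum n k ℓ) := by
  induction x using Finsupp.induction_linear with
  | zero => rw [mul_zero, zero_mul]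
  | add x y hx hy => rw [mul_add, add_mul, hx, hy]
  | single b c => rw [dotSum_mul_single, single_mul_dotSum]

end KLRW

theorem klrw_dots_central_general (n : ℕ) (k : Type*) [Field k] :
    (∀ (j i : Fin (n + 1)) (α ℓ : ℕ),
        KLRW.mul n k (KLRW.bas n k j i α) (KLRW.bas n k i i ℓ) = KLRW.bas n k j i (α + ℓ) ∧
        KLRW.mul n k (KLRW.bas n k j j ℓ) (KLRW.bas n k j i α) = KLRW.bas n k j i (α + ℓ)) ∧
    (∀ (ℓ : ℕ) (x : KLRW.A n k),
        KLRW.mul n k (Finset.univ.sum fun i : Fin (n + 1) => KLRW.bas n k i i ℓ) x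
          = KLRW.mul n k x (Finset.univ.sum fun i : Fin (n + 1) => KLRW.bas n k i i ℓ)) :=
  ⟨fun j i α ℓ => ⟨KLRW.bas_mul_dots n k j i α ℓ, KLRW.dots_mul_bas n k j i α ℓ⟩,
    KLRW.dotSum_mul_comm n k⟩

/-- `(a_{j,i}s^α)·s_i^ℓ = a_{j,i}s^{α+ℓ} = s_j^ℓ·(a_{j,i}s^α)` for every basis element and
every `ℓ`; consequently `z_ℓ := Σ_{i=0}^n s_i^ℓ` is central in the KLRW algebra.  (These
central elements realize the degree-0 A∞-natural transformations `id ⇒ id`,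
`η⁰(T_i) = Σ_ℓ ε_ℓ s_i^ℓ`.) -/
theorem klrw_dots_central (n : ℕ) (hn : 1 ≤ n) (k : Type*) [Field k] :
    (∀ (j i : Fin (n + 1)) (α ℓ : ℕ),
        KLRW.mul n k (KLRW.bas n k j i α) (KLRW.bas n k i i ℓ) = KLRW.bas n k j i (α + ℓ) ∧
        KLRW.mul n k (KLRW.bas n k j j ℓ) (KLRW.bas n k j i α) = KLRW.bas n k j i (α + ℓ)) ∧
    (∀ (ℓ : ℕ) (x : KLRW.A n k),
        KLRW.mul n k (Finset.univ.sum fun i : Fin (n + 1) => KLRW.bas n k i i ℓ) x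
          = KLRW.mul n k x (Finset.univ.sum fun i : Fin (n + 1) => KLRW.bas n k i i ℓ)) :=
  klrw_dots_central_general n k
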